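/- If X is the counting process associated with a linear death process with individual death rate δ > 0 and initial population d₀ (so λ_X(x) = δ(d₀ − x) for x < d₀), and N is an independent unit-rate Poisson process, then S(t) = X(N(t)) has transition rates q^S_{s,k} = C(d₀−s, k)(1 − e^{−δ})^k (e^{−δ})^{d₀−s−k} for 0 ≤ s ≤ d₀−1 and 1 ≤ k ≤ d₀−s, and rate function λ_S(s) = 1 − e^{−δ(d₀−s)} for s < d₀. -/

import Mathlib

/-
Given `X(0) = s`, the time-changed process is the Poisson mixture `∑ₙ π_h(n) P(n)` with
`π_h(n) = e^{-h} hⁿ / n!`. Since `π_h(0) = e^{-h}`, `π_h(1) = h e^{-h}` and the weights of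
`n ≥ 2` sum to `O(h²)`, for any bounded sequence `a` (here binomial probabilities) the mixture
satisfies `(∑ₙ π_h(n) aₙ - a₀) / h → a₁ - a₀` as `h → 0⁺`. The rates of `S` are therefore read off from
one unit of time of `X`: `P(1)` is the binomial law with success probability `1 - e^{-δ}`, and
`P(0)` is the identity.
-/

open Filter Topology

/-- Poisson probability mass function with mean `t`. -/
noncomputable def poissonPMF (t : ℝ) (n : ℕ) : ℝ :=
  Real.exp (-t) * t ^ n / n.factorial

/-- Transition probabilities of the time-changed process `S(t) = X(N(t))`, where `N` is a
unit-rate Poisson process independent of `X`: the Poisson mixture of those of `X`. -/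
noncomputable def timeChanged (P : ℝ → ℕ → ℕ → ℝ) (t : ℝ) (x y : ℕ) : ℝ :=
  ∑' n : ℕ, poissonPMF t n * P (n : ℝ) x y

section PoissonMixture

lemma poissonPMF_nonneg {t : ℝ} (ht : 0 ≤ t) (n : ℕ) : 0 ≤ poissonPMF t n := by
  unfold poissonPMF
  positivity

lemma poissonPMF_one (t : ℝ) : poissonPMF t 1 = t * Real.exp (-t) := by
  simp [poissonPMF, mul_comm]

lemma hasSum_poissonPMF (t : ℝ) : HasSum (poissonPMF t) 1 := by
  have h := (NormedSpace.expSeries_div_hasSum_exp t).mul_left (Real.exp (-t))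
  rw [← Real.exp_eq_exp_ℝ, ← Real.exp_add, neg_add_cancel, Real.exp_zero] at h
  have hpmf : poissonPMF t = fun n => Real.exp (-t) * (t ^ n / n.factorial) := by
    funext n
    rw [poissonPMF, mul_div_assoc]
  rw [hpmf]
  exact h

lemma poissonPMF_add_two_le {t : ℝ} (ht : 0 ≤ t) (n : ℕ) :
    poissonPMF t (n + 2) ≤ t ^ 2 * poissonPMF t n := by
  have hfact : (n.factorial : ℝ) ≤ (n + 2).factorial := by
    exact_mod_cast Nat.factorial_le (by omega)
  calc poissonPMF t (n + 2) ≤ Real.exp (-t) * t ^ (n + 2) / n.factorial :=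
        div_le_div_of_nonneg_left (by positivity) (by positivity) hfact
    _ = t ^ 2 * poissonPMF t n := by
        rw [poissonPMF, pow_add]
        ring

variable {a : ℕ → ℝ} {C : ℝ}

lemma summable_poissonPMF_mul {t : ℝ} (ht : 0 ≤ t) (ha : ∀ n, |a n| ≤ C) :
    Summable (fun n => poissonPMF t n * a n) := by
  refine .of_norm_bounded (g := fun n => C * poissonPMF t n)
    ((hasSum_poissonPMF t).summable.mul_left C) fun n => ?_
  rw [Real.norm_eq_abs, abs_mul, abs_of_nonneg (poissonPMF_nonneg ht n), mul_comm]
  exact mul_le_mul_of_nonneg_right (ha n) (poissonPMF_nonneg ht n)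

lemma abs_tsum_poissonPMF_add_two_mul_le {t : ℝ} (ht : 0 ≤ t) (ha : ∀ n, |a n| ≤ C) :
    |∑' n, poissonPMF t (n + 2) * a (n + 2)| ≤ C * t ^ 2 := by
  have hsum : HasSum (fun n => C * t ^ 2 * poissonPMF t n) (C * t ^ 2) := by
    simpa using (hasSum_poissonPMF t).mul_left (C * t ^ 2)
  refine tsum_of_norm_bounded (f := fun n => poissonPMF t (n + 2) * a (n + 2)) hsum
    fun n => ?_
  calc ‖poissonPMF t (n + 2) * a (n + 2)‖ = poissonPMF t (n + 2) * |a (n + 2)| := by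
        rw [Real.norm_eq_abs, abs_mul, abs_of_nonneg (poissonPMF_nonneg ht _)]
    _ ≤ t ^ 2 * poissonPMF t n * C :=
        mul_le_mul (poissonPMF_add_two_le ht n) (ha _) (abs_nonneg _)
          (mul_nonneg (sq_nonneg t) (poissonPMF_nonneg ht n))
    _ = C * t ^ 2 * poissonPMF t n := by ring

lemma tendsto_tsum_poissonPMF_mul_div (ha : ∀ n, |a n| ≤ C) (ha₀ : a 0 = 0) :
    Tendsto (fun h => (∑' n, poissonPMF h n * a n) / h) (𝓝[>] 0) (𝓝 (a 1)) := by
  have hmain : Tendsto (fun h : ℝ => Real.exp (-h) * a 1) (𝓝[>] 0) (𝓝 (a 1)) := by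
    have : Continuous (fun h : ℝ => Real.exp (-h) * a 1) := by fun_prop
    simpa using this.continuousWithinAt.tendsto (x := 0) (s := Set.Ioi 0)
  have htail : Tendsto (fun h => (∑' n, poissonPMF h (n + 2) * a (n + 2)) / h)
      (𝓝[>] 0) (𝓝 0) := by
    have hlin : Tendsto (fun h : ℝ => C * h) (𝓝[>] 0) (𝓝 0) := by
      have : Continuous (fun h : ℝ => C * h) := by fun_prop
      simpa using this.continuousWithinAt.tendsto (x := 0) (s := Set.Ioi 0)
    refine squeeze_zero_norm' ?_ hlin
    filter_upwards [self_mem_nhdsWithin] with h (hh : 0 < h)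
    rw [Real.norm_eq_abs, abs_div, abs_of_pos hh, div_le_iff₀ hh]
    simpa [sq, mul_assoc] using abs_tsum_poissonPMF_add_two_mul_le hh.le ha
  have hsplit := hmain.add htail
  rw [add_zero] at hsplit
  refine hsplit.congr' ?_
  filter_upwards [self_mem_nhdsWithin] with h (hh : 0 < h)
  have hsum := summable_poissonPMF_mul hh.le ha
  rw [hsum.tsum_eq_zero_add, ((summable_nat_add_iff 1).2 hsum).tsum_eq_zero_add]
  simp only [ha₀, poissonPMF_one, mul_zero, zero_add]
  field_simp

end PoissonMixture

theorem tendsto_timeChanged_sub_div {P : ℝ → ℕ → ℕ → ℝ} {x y : ℕ} {C : ℝ}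
    (hP : ∀ n : ℕ, |P n x y| ≤ C) :
    Tendsto (fun h => (timeChanged P h x y - P 0 x y) / h) (𝓝[>] 0)
      (𝓝 (P 1 x y - P 0 x y)) := by
  set a : ℕ → ℝ := fun n => P n x y - P 0 x y
  have ha : ∀ n, |a n| ≤ C + C := fun n =>
    (abs_sub _ _).trans (add_le_add (hP n) (by simpa using hP 0))
  have hlim := tendsto_tsum_poissonPMF_mul_div ha (by simp [a])
  simp only [a, Nat.cast_one] at hlim
  refine hlim.congr' ?_
  filter_upwards [self_mem_nhdsWithin] with h (hh : 0 < h)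
  -- the weights sum to one, so subtracting `P 0 x y` can be done inside the mixture
  have hmix := ((summable_poissonPMF_mul hh.le hP).hasSum.sub
    ((hasSum_poissonPMF h).mul_right (P 0 x y))).tsum_eq
  simp only [one_mul, ← mul_sub] at hmix
  simp only [timeChanged, hmix]

lemma abs_choose_mul_one_sub_pow_mul_pow_le_one {q : ℝ} (hq₀ : 0 ≤ q) (hq₁ : q ≤ 1)
    {m k : ℕ} (hk : k ≤ m) : |(m.choose k : ℝ) * (1 - q) ^ k * q ^ (m - k)| ≤ 1 := by
  set x : unitInterval := ⟨1 - q, by linarith, by linarith⟩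
  have hx : (m.choose k : ℝ) * (1 - q) ^ k * q ^ (m - k) = bernstein m k x := by
    rw [bernstein_apply]
    simp only [x, sub_sub_cancel]
  rw [hx, abs_of_nonneg bernstein_nonneg]
  calc bernstein m k x = bernstein m (⟨k, by omega⟩ : Fin (m + 1)) x := rfl
    _ ≤ ∑ i : Fin (m + 1), bernstein m i x :=
        Finset.single_le_sum (f := fun i : Fin (m + 1) => bernstein m i x)
          (fun _ _ => bernstein_nonneg) (Finset.mem_univ _)
    _ = 1 := bernstein.probability m x

theorem stmt6_general (δ : ℝ) (hδ : 0 < δ) (d₀ : ℕ) (P : ℝ → ℕ → ℕ → ℝ)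
    (hPdef : ∀ t : ℝ, 0 ≤ t → ∀ s k : ℕ, s + k ≤ d₀ →
      P t s (s + k) = (d₀ - s).choose k *
        (1 - Real.exp (-(δ * t))) ^ k * Real.exp (-(δ * t)) ^ (d₀ - s - k)) :
    (∀ s k : ℕ, s < d₀ → 1 ≤ k → k ≤ d₀ - s →
      Tendsto (fun h : ℝ => timeChanged P h s (s + k) / h) (𝓝[>] 0)
        (𝓝 ((d₀ - s).choose k * (1 - Real.exp (-δ)) ^ k *
          Real.exp (-δ) ^ (d₀ - s - k)))) ∧
    (∀ s : ℕ, s < d₀ →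
      Tendsto (fun h : ℝ => (1 - timeChanged P h s s) / h) (𝓝[>] 0)
        (𝓝 (1 - Real.exp (-(δ * (d₀ - s : ℕ)))))) := by
  have hbound : ∀ s k : ℕ, s + k ≤ d₀ → ∀ n : ℕ, |P n s (s + k)| ≤ 1 := fun s k hsk n => by
    rw [hPdef n n.cast_nonneg s k hsk]
    exact abs_choose_mul_one_sub_pow_mul_pow_le_one (Real.exp_nonneg _)
      (Real.exp_le_one_iff.2 (neg_nonpos.2 (mul_nonneg hδ.le n.cast_nonneg))) (by omega)
  refine ⟨fun s k _ hk hkd => ?_, fun s hs => ?_⟩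
  · have hsk : s + k ≤ d₀ := by omega
    have h₀ : P 0 s (s + k) = 0 := by
      rw [hPdef 0 le_rfl s k hsk]
      simp [zero_pow (by omega : k ≠ 0)]
    have h₁ := hPdef 1 zero_le_one s k hsk
    simpa [h₀, h₁] using tendsto_timeChanged_sub_div (hbound s k hsk)
  · have h₀ : P 0 s s = 1 := by simpa using hPdef 0 le_rfl s 0 (by omega)
    have h₁ : P 1 s s = Real.exp (-(δ * (d₀ - s : ℕ))) := by
      have h := hPdef 1 zero_le_one s 0 (by omega)
      simp only [add_zero, mul_one, Nat.choose_zero_right, Nat.cast_one, pow_zero, one_mul,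
        Nat.sub_zero] at h
      rw [h, ← Real.exp_nat_mul]
      ring_nf
    have h := (tendsto_timeChanged_sub_div (hbound s 0 (by omega))).neg
    simp only [add_zero, h₀, h₁, ← neg_div, neg_sub] at h
    exact h

/-- **Binomial Poisson process.** If `X` counts the deaths of a linear death
process with individual death rate `δ > 0` and initial population `d₀` (so, given
`X(0) = s ≤ d₀`, the number of new deaths `X(t) - s` is binomial with `d₀ - s` trials and
success probability `1 - exp (-δt)`) and `N` is an independent unit-rate Poisson process,
then `S(t) = X(N(t))` has transition rates
`q^S_{s,k} = C(d₀-s, k) (1 - exp (-δ))^k (exp (-δ))^(d₀-s-k)` for `0 ≤ s ≤ d₀ - 1` and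
`1 ≤ k ≤ d₀ - s`, and rate function `λ_S(s) = 1 - exp (-δ(d₀-s))` for `s < d₀`. -/
theorem stmt6 (δ : ℝ) (hδ : 0 < δ) (d₀ : ℕ) (P : ℝ → ℕ → ℕ → ℝ)
    (hPdef : ∀ t : ℝ, 0 ≤ t → ∀ s k : ℕ, s + k ≤ d₀ →
      P t s (s + k) = (d₀ - s).choose k *
        (1 - Real.exp (-(δ * t))) ^ k * Real.exp (-(δ * t)) ^ (d₀ - s - k))
    (hPzero : ∀ t : ℝ, 0 ≤ t → ∀ s y : ℕ, y < s ∨ d₀ < y → P t s y = 0) :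
    (∀ s k : ℕ, s < d₀ → 1 ≤ k → k ≤ d₀ - s →
      Tendsto (fun h : ℝ => timeChanged P h s (s + k) / h) (𝓝[>] 0)
        (𝓝 ((d₀ - s).choose k * (1 - Real.exp (-δ)) ^ k *
          Real.exp (-δ) ^ (d₀ - s - k)))) ∧
    (∀ s : ℕ, s < d₀ →
      Tendsto (fun h : ℝ => (1 - timeChanged P h s s) / h) (𝓝[>] 0)
        (𝓝 (1 - Real.exp (-(δ * (d₀ - s : ℕ)))))) :=
  stmt6_general δ hδ d₀ P hPdef
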